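/- Assume εΓε = Γ, where ε = [[−1,0],[0,1]]. For f ∈ S_k(Γ), the function f*(z) = conj(f(−conj(z))) is again a cusp form in S_k(Γ), and conj(ρ_{f*}) = (−1)^{w+1}·(ρ_f|ε), where conj acts by conjugating all coefficients of each polynomial component. -/

import Mathlib

noncomputable section

open Matrix Polynomial Finset Filter MeasureTheory

abbrev SL2Z := Matrix.SpecialLinearGroup (Fin 2) ℤ

def mc (g : SL2Z) (i j : Fin 2) : ℂ := ((g : Matrix (Fin 2) (Fin 2) ℤ) i j : ℂ)

def Sm : SL2Z := ⟨!![0, -1; 1, 0], by norm_num [Matrix.det_fin_two_of]⟩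
def Tm : SL2Z := ⟨!![1, 1; 0, 1], by norm_num [Matrix.det_fin_two_of]⟩
def Um : SL2Z := Tm * Sm

def negSL (A : SL2Z) : SL2Z := ⟨-A.1, by simp [Matrix.det_neg, A.2]⟩

/-- weight `-w` right action of `g` on polynomials of degree at most `w`:
`(P|g)(X) = (cX+d)^w P((aX+b)/(cX+d))`. -/
def pSlash (w : ℕ) (P : Polynomial ℂ) (g : SL2Z) : Polynomial ℂ :=
  ∑ n ∈ Finset.range (w + 1),
    C (P.coeff n) * (C (mc g 0 0) * X + C (mc g 0 1)) ^ n *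
      (C (mc g 1 0) * X + C (mc g 1 1)) ^ (w - n)

/-- right action of `g` on families `P : Γ₁ → V_w`: `(P|g)(A) = P(Ag⁻¹)|g`. -/
def famSlash (w : ℕ) (P : SL2Z → Polynomial ℂ) (g : SL2Z) : SL2Z → Polynomial ℂ :=
  fun A => pSlash w (P (A * g⁻¹)) g

/-- membership in the induced module `V_w^Γ`. -/
structure MemV (Γ : Subgroup SL2Z) (w : ℕ) (P : SL2Z → Polynomial ℂ) : Prop where
  deg : ∀ A, (P A).degree ≤ (w : ℕ)
  inv : ∀ γ ∈ Γ, ∀ A, P (γ * A) = P A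
  parity : ∀ A, P (negSL A) = (-1 : ℂ) ^ w • P A

/-- the space of period polynomials `W_w^Γ`. -/
def MemW (Γ : Subgroup SL2Z) (w : ℕ) (P : SL2Z → Polynomial ℂ) : Prop :=
  MemV Γ w P ∧ (∀ A, P A + famSlash w P Sm A = 0) ∧
    (∀ A, P A + famSlash w P Um A + famSlash w P (Um * Um) A = 0)

/-- the space of coboundary polynomials `C_w^Γ = {P|(1-S) : P ∈ V_w^Γ, P|T = P}`. -/
def MemC (Γ : Subgroup SL2Z) (w : ℕ) (Q : SL2Z → Polynomial ℂ) : Prop :=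
  ∃ P, MemV Γ w P ∧ (∀ A, famSlash w P Tm A = P A) ∧ ∀ A, Q A = P A - famSlash w P Sm A

def uhp : Set ℂ := {z | 0 < z.im}

/-- the weight `k` slash action on functions. -/
def slashk (k : ℤ) (g : SL2Z) (f : ℂ → ℂ) : ℂ → ℂ := fun z =>
  (mc g 1 0 * z + mc g 1 1) ^ (-k) *
    f ((mc g 0 0 * z + mc g 0 1) / (mc g 1 0 * z + mc g 1 1))

/-- cusp forms of weight `k` for `Γ`. -/
structure IsCuspForm (Γ : Subgroup SL2Z) (k : ℤ) (f : ℂ → ℂ) : Prop where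
  holo : DifferentiableOn ℂ f uhp
  trans : ∀ γ ∈ Γ, ∀ z ∈ uhp, slashk k γ f z = f z
  decay : ∀ A : SL2Z, Tendsto (slashk k A f) (Filter.comap Complex.im atTop) (nhds 0)

/-- the period polynomial `ρ_f(A) = ∫₀^{i∞} (f|A)(t)(t-X)^w dt`, via its coefficients. -/
def rho (k : ℤ) (w : ℕ) (f : ℂ → ℂ) (A : SL2Z) : Polynomial ℂ :=
  ∑ m ∈ Finset.range (w + 1),
    C ((-1 : ℂ) ^ m * (w.choose m : ℂ) * Complex.I ^ (w - m + 1) *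
        ∫ y in Set.Ioi (0 : ℝ), slashk k A f (Complex.I * y) * (y : ℂ) ^ (w - m)) * X ^ m

/-- the pairing `⟨·,·⟩` on `V_w`. -/
def pairV (w : ℕ) (P Q : Polynomial ℂ) : ℂ :=
  ∑ n ∈ Finset.range (w + 1),
    (-1 : ℂ) ^ (w - n) * ((w.choose n : ℂ))⁻¹ * P.coeff n * Q.coeff (w - n)

/-- the pairing `⟪·,·⟫` on `V_w^Γ`, w.r.t. a set `Rt` of coset representatives for `Γ\Γ₁`. -/
def pairG (Γ : Subgroup SL2Z) (w : ℕ) (Rt : Finset SL2Z) (P Q : SL2Z → Polynomial ℂ) : ℂ :=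
  ((Γ.index : ℂ))⁻¹ * ∑ A ∈ Rt, pairV w (P A) (Q A)

/-- the pairing `{P,Q} = ⟪P|(T-T⁻¹),Q⟫`. -/
def brk (Γ : Subgroup SL2Z) (w : ℕ) (Rt : Finset SL2Z) (P Q : SL2Z → Polynomial ℂ) : ℂ :=
  pairG Γ w Rt (fun A => famSlash w P Tm A - famSlash w P Tm⁻¹ A) Q

/-- `Rt` is a set of representatives for the right cosets `Γ\Γ₁`. -/
def IsTransversal (Γ : Subgroup SL2Z) (Rt : Finset SL2Z) : Prop :=
  Subgroup.IsComplement (Γ : Set SL2Z) (Rt : Set SL2Z)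

/-- the standard fundamental domain for `SL₂(ℤ)` in the upper half plane. -/
def fundDom : Set ℂ := {z | 0 < z.im ∧ 1 ≤ ‖z‖ ∧ |z.re| ≤ 1 / 2}

/-- the Petersson product w.r.t. a set `Rt` of coset representatives for `Γ\Γ₁`. -/
def petersson (Γ : Subgroup SL2Z) (k : ℤ) (Rt : Finset SL2Z) (f g : ℂ → ℂ) : ℂ :=
  ((Γ.index : ℂ))⁻¹ * ∑ A ∈ Rt, ∫ z in fundDom,
    slashk k A f z * (starRingEnd ℂ) (slashk k A g z) * (z.im : ℂ) ^ (k - 2)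

def Ck (k : ℤ) : ℂ := -(2 * Complex.I) ^ (k - 1)

/-- conjugation of `A` by `ε = [[-1,0],[0,1]]`. -/
def epsConj (A : SL2Z) : SL2Z :=
  ⟨!![A.1 0 0, -A.1 0 1; -A.1 1 0, A.1 1 1], by
    have h := A.2
    rw [Matrix.det_fin_two] at h
    rw [Matrix.det_fin_two_of]
    linear_combination h⟩

/-- the involution `(P|ε)(A)(X) = P(εAε)(-X)` of `V_w^Γ`. -/
def epsAct (w : ℕ) (P : SL2Z → Polynomial ℂ) : SL2Z → Polynomial ℂ :=
  fun A => (P (epsConj A)).comp (-X)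

/-- `P^± = (P ± P|ε)/2`, where `s = ±1`. -/
def pm (w : ℕ) (s : ℂ) (P : SL2Z → Polynomial ℂ) : SL2Z → Polynomial ℂ :=
  fun A => (2 : ℂ)⁻¹ • (P A + s • epsAct w P A)

/-- coefficientwise complex conjugation. -/
def conjFam (P : SL2Z → Polynomial ℂ) : SL2Z → Polynomial ℂ :=
  fun A => (P A).map (starRingEnd ℂ)

/-- the periods `r_{A,n}(f)`, extracted from any `P ∈ V_w^Γ` by
`P(A)(X) = Σₙ (-1)^{w-n} binom(w,n) r_{A,n} X^{w-n}`. -/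
def per (w : ℕ) (P : SL2Z → Polynomial ℂ) (A : SL2Z) (n : ℕ) : ℂ :=
  (-1 : ℂ) ^ (w - n) * ((w.choose n : ℂ))⁻¹ * (P A).coeff (w - n)

/-- `f*(z) = conj (f (-conj z))`. -/
def starForm (f : ℂ → ℂ) : ℂ → ℂ := fun z => (starRingEnd ℂ) (f (-(starRingEnd ℂ) z))

/-! Conjugation by `ε` acts on `ℍ` as `z ↦ -z̄`, which gives `(f*|A)(z) = conj ((f|εAε)(-z̄))`.
Invariance, decay and holomorphy of `f*` follow from those of `f`. On the imaginary axis
`-z̄ = z`, so the period integrals of `f*` at `A` are the conjugates of those of `f` at `εAε`.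
The sign `(-1)^{w+1}` comes from `conj (i^{w-m+1})` together with `X ↦ -X`. -/

open scoped ComplexConjugate

@[simp] lemma mc_epsConj_zero_zero (A : SL2Z) : mc (epsConj A) 0 0 = mc A 0 0 := by
  simp [mc, epsConj]

@[simp] lemma mc_epsConj_zero_one (A : SL2Z) : mc (epsConj A) 0 1 = -mc A 0 1 := by
  simp [mc, epsConj]

@[simp] lemma mc_epsConj_one_zero (A : SL2Z) : mc (epsConj A) 1 0 = -mc A 1 0 := by
  simp [mc, epsConj]

@[simp] lemma mc_epsConj_one_one (A : SL2Z) : mc (epsConj A) 1 1 = mc A 1 1 := by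
  simp [mc, epsConj]

@[simp] lemma conj_mc (g : SL2Z) (i j : Fin 2) : conj (mc g i j) = mc g i j := by
  simp [mc]

lemma isOpen_uhp : IsOpen uhp :=
  isOpen_lt continuous_const Complex.continuous_im

lemma neg_conj_mem_uhp {z : ℂ} (hz : z ∈ uhp) : -conj z ∈ uhp := by
  simpa [uhp] using hz

lemma slashk_starForm (k : ℤ) (A : SL2Z) (f : ℂ → ℂ) (z : ℂ) :
    slashk k A (starForm f) z = conj (slashk k (epsConj A) f (-conj z)) := by
  simp only [slashk, starForm, mc_epsConj_zero_zero, mc_epsConj_zero_one, mc_epsConj_one_zero,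
    mc_epsConj_one_one, map_mul, map_zpow₀, map_div₀, map_add, map_neg, conj_mc,
    Complex.conj_conj]
  ring_nf

lemma DifferentiableOn.starForm {f : ℂ → ℂ} (hf : DifferentiableOn ℂ f uhp) :
    DifferentiableOn ℂ (starForm f) uhp := by
  intro z hz
  have hf' : DifferentiableAt ℂ f (-conj z) :=
    hf.differentiableAt (isOpen_uhp.mem_nhds (neg_conj_mem_uhp hz))
  have hneg : DifferentiableAt ℂ (fun u => f (-u)) (conj z) :=
    hf'.comp (conj z) differentiableAt_id.neg
  exact (differentiableAt_conj_conj_iff.mpr (by simpa using hneg)).differentiableWithinAt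

lemma IsCuspForm.starForm {Γ : Subgroup SL2Z} {k : ℤ} {f : ℂ → ℂ}
    (hΓ : ∀ γ : SL2Z, epsConj γ ∈ Γ ↔ γ ∈ Γ) (hf : IsCuspForm Γ k f) :
    IsCuspForm Γ k (starForm f) where
  holo := hf.holo.starForm
  trans γ hγ z hz := by
    rw [slashk_starForm, hf.trans _ ((hΓ γ).mpr hγ) _ (neg_conj_mem_uhp hz)]
    rfl
  decay A := by
    have hneg_conj : Tendsto (fun z : ℂ => -conj z) (comap Complex.im atTop)
        (comap Complex.im atTop) :=
      tendsto_comap_iff.mpr (by simpa [Function.comp_def] using tendsto_comap)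
    have h := (Complex.continuous_conj.tendsto 0).comp ((hf.decay (epsConj A)).comp hneg_conj)
    rw [map_zero] at h
    exact h.congr fun z => (slashk_starForm k A f z).symm

lemma conj_integral_slashk_starForm (k : ℤ) (A : SL2Z) (f : ℂ → ℂ) (n : ℕ) :
    conj (∫ y in Set.Ioi (0 : ℝ), slashk k A (starForm f) (Complex.I * y) * (y : ℂ) ^ n)
      = ∫ y in Set.Ioi (0 : ℝ), slashk k (epsConj A) f (Complex.I * y) * (y : ℂ) ^ n := by
  rw [← integral_conj]
  congr 1 with y
  simp [slashk_starForm]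

lemma neg_I_pow_sub_add_one {m w : ℕ} (hm : m ≤ w) :
    (-Complex.I) ^ (w - m + 1) = (-1) ^ (w + 1) * (-1) ^ m * Complex.I ^ (w - m + 1) := by
  have hsplit : (-1 : ℂ) ^ (w + 1) = (-1) ^ (w - m + 1) * (-1) ^ m := by
    rw [← pow_add]; congr 1; omega
  have hsq : (-1 : ℂ) ^ m * (-1) ^ m = 1 := by rw [← mul_pow]; simp
  rw [neg_pow, hsplit]
  linear_combination (-(-1 : ℂ) ^ (w - m + 1) * Complex.I ^ (w - m + 1)) * hsq

lemma rho_starForm (k : ℤ) (w : ℕ) (f : ℂ → ℂ) (A : SL2Z) :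
    conjFam (rho k w (starForm f)) A = (-1 : ℂ) ^ (w + 1) • epsAct w (rho k w f) A := by
  simp only [conjFam, epsAct, rho, Polynomial.map_sum, Polynomial.sum_comp, Finset.smul_sum]
  refine Finset.sum_congr rfl fun m hm => ?_
  have hcoeff : conj ((-1 : ℂ) ^ m * (w.choose m : ℂ) * Complex.I ^ (w - m + 1) *
        ∫ y in Set.Ioi (0 : ℝ), slashk k A (starForm f) (Complex.I * y) * (y : ℂ) ^ (w - m))
      = (-1) ^ (w + 1) * ((-1) ^ m * ((-1 : ℂ) ^ m * (w.choose m : ℂ) *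
          Complex.I ^ (w - m + 1) *
          ∫ y in Set.Ioi (0 : ℝ), slashk k (epsConj A) f (Complex.I * y) * (y : ℂ) ^ (w - m))) := by
    simp only [map_mul, map_pow, map_neg, map_one, Complex.conj_natCast, Complex.conj_I,
      conj_integral_slashk_starForm,
      neg_I_pow_sub_add_one (Nat.lt_succ_iff.mp (Finset.mem_range.mp hm))]
    ring
  rw [Polynomial.map_mul, Polynomial.map_pow, map_C, map_X, hcoeff, mul_comp, C_comp, pow_comp,
    X_comp, neg_pow (X : ℂ[X]), smul_eq_C_mul]
  simp only [C_mul, C_pow, C_neg, C_1]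
  ring

theorem statement2 (Γ : Subgroup SL2Z) (k : ℤ)
    (w : ℕ)
    (hΓ : ∀ γ : SL2Z, epsConj γ ∈ Γ ↔ γ ∈ Γ)
    (f : ℂ → ℂ) (hf : IsCuspForm Γ k f) :
    IsCuspForm Γ k (starForm f) ∧
    ∀ A : SL2Z, conjFam (rho k w (starForm f)) A
      = (-1 : ℂ) ^ (w + 1) • epsAct w (rho k w f) A :=
  ⟨hf.starForm hΓ, rho_starForm k w f⟩

end
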